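/- Fix e ∈ [0,1). A twice-differentiable function x : ℝ → ℝ with x(2π) = x(0) and x'(2π) = x'(0) satisfies x''(t) = −x(t) + x(t)/(1 + e cos t) for all t ∈ [0,2π] if and only if x(t) = c·(1 + e cos t) for some constant c ∈ ℝ. In particular, the 2π-periodic solution space of this equation (the case β = 1) is exactly the one-dimensional span of 1 + e cos t. -/

import Mathlib

/-!
Both `x` and `φ t = 1 + e cos t` solve `y'' = q y` with `q = -1 + 1/φ`, so their Wronskian
`x' φ - x φ'` is a constant `w`, and `(x / φ)' = w / φ²`. Since `φ > 0` and `x / φ` takes the same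
value at `0` and `2π`, Rolle's theorem forces `w = 0`; hence `x / φ` is constant.
-/

open Real

theorem eq_of_hasDerivAt_zero {f : ℝ → ℝ} (hf : ∀ t, HasDerivAt f 0 t) (t s : ℝ) : f t = f s :=
  is_const_of_deriv_eq_zero (fun r => (hf r).differentiableAt) (fun r => (hf r).deriv) t s

section SecondOrderLinear

variable {q x x' x'' y y' y'' : ℝ → ℝ}

theorem hasDerivAt_wronskian_eq_zero
    (hx : ∀ t, HasDerivAt x (x' t) t) (hx' : ∀ t, HasDerivAt x' (x'' t) t)
    (hy : ∀ t, HasDerivAt y (y' t) t) (hy' : ∀ t, HasDerivAt y' (y'' t) t)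
    (hxq : ∀ t, x'' t = q t * x t) (hyq : ∀ t, y'' t = q t * y t) (t : ℝ) :
    HasDerivAt (fun s => x' s * y s - x s * y' s) 0 t :=
  ((hx' t).mul (hy t)).sub ((hx t).mul (hy' t)) |>.congr_deriv <| by rw [hxq, hyq]; ring

theorem exists_eq_const_mul_of_div_eq
    (hx : ∀ t, HasDerivAt x (x' t) t) (hx' : ∀ t, HasDerivAt x' (x'' t) t)
    (hy : ∀ t, HasDerivAt y (y' t) t) (hy' : ∀ t, HasDerivAt y' (y'' t) t)
    (hxq : ∀ t, x'' t = q t * x t) (hyq : ∀ t, y'' t = q t * y t)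
    (hy0 : ∀ t, y t ≠ 0) {a b : ℝ} (hab : a < b) (hxy : x a / y a = x b / y b) :
    ∃ c, ∀ t, x t = c * y t := by
  set w := x' 0 * y 0 - x 0 * y' 0
  have hW : ∀ t, x' t * y t - x t * y' t = w :=
    fun t => eq_of_hasDerivAt_zero (hasDerivAt_wronskian_eq_zero hx hx' hy hy' hxq hyq) t 0
  have hu : ∀ t, HasDerivAt (fun s => x s / y s) (w / y t ^ 2) t := fun t =>
    hW t ▸ (hx t).div (hy t) (hy0 t)
  obtain ⟨t, -, ht⟩ := exists_hasDerivAt_eq_zero hab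
    (HasDerivAt.continuousOn fun t _ => hu t) hxy fun t _ => hu t
  have hw : w = 0 := by simpa [hy0 t] using ht
  have hu0 : ∀ t, HasDerivAt (fun s => x s / y s) 0 t := by simpa [hw] using hu
  refine ⟨x 0 / y 0, fun t => ?_⟩
  rw [← eq_of_hasDerivAt_zero hu0 t 0, div_mul_cancel₀ _ (hy0 t)]

theorem secondDeriv_eq_mul_of_eq_const_mul
    (hx : ∀ t, HasDerivAt x (x' t) t) (hx' : ∀ t, HasDerivAt x' (x'' t) t)
    (hy : ∀ t, HasDerivAt y (y' t) t) (hy' : ∀ t, HasDerivAt y' (y'' t) t)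
    (hyq : ∀ t, y'' t = q t * y t) {c : ℝ} (hxy : ∀ t, x t = c * y t) (t : ℝ) :
    x'' t = q t * x t := by
  obtain rfl : x = fun s => c * y s := funext hxy
  obtain rfl : x' = fun s => c * y' s := funext fun s => (hx s).unique ((hy s).const_mul c)
  rw [(hx' t).unique ((hy' t).const_mul c), hyq, hxy]
  ring

end SecondOrderLinear

theorem one_add_mul_cos_pos {e : ℝ} (he : |e| < 1) (t : ℝ) : 0 < 1 + e * cos t := by
  have : |e * cos t| ≤ |e| := by
    rw [abs_mul]
    exact mul_le_of_le_one_right (abs_nonneg e) (abs_cos_le_one t)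
  linarith [neg_abs_le (e * cos t)]

theorem hasDerivAt_one_add_mul_cos (e t : ℝ) :
    HasDerivAt (fun s => 1 + e * cos s) (-(e * sin t)) t := by
  simpa using ((hasDerivAt_cos t).const_mul e).const_add 1

theorem hasDerivAt_neg_mul_sin (e t : ℝ) :
    HasDerivAt (fun s => -(e * sin s)) (-(e * cos t)) t :=
  ((hasDerivAt_sin t).const_mul e).neg

theorem stmt_13_general (e : ℝ) (he : e ∈ Set.Ico (0 : ℝ) 1)
    (x x' x'' : ℝ → ℝ)
    (hx : ∀ t, HasDerivAt x (x' t) t)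
    (hx' : ∀ t, HasDerivAt x' (x'' t) t)
    (hbc1 : x (2 * π) = x 0) :
    (∀ t, x'' t = -(x t) + x t / (1 + e * Real.cos t)) ↔
      ∃ c : ℝ, ∀ t, x t = c * (1 + e * Real.cos t) := by
  have hφ0 : ∀ t, 1 + e * cos t ≠ 0 := fun t =>
    (one_add_mul_cos_pos (abs_lt.2 ⟨by linarith [he.1], he.2⟩) t).ne'
  have hφq : ∀ t, -(e * cos t) = (-1 + 1 / (1 + e * cos t)) * (1 + e * cos t) := fun t => by
    field_simp [hφ0 t]
    ring
  have hq : ∀ t, -(x t) + x t / (1 + e * cos t) = (-1 + 1 / (1 + e * cos t)) * x t := fun t => by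
    ring
  simp only [hq]
  constructor
  · intro hxq
    exact exists_eq_const_mul_of_div_eq hx hx' (hasDerivAt_one_add_mul_cos e)
      (hasDerivAt_neg_mul_sin e) hxq hφq hφ0 two_pi_pos (by simp [hbc1])
  · rintro ⟨c, hc⟩
    exact secondDeriv_eq_mul_of_eq_const_mul hx hx' (hasDerivAt_one_add_mul_cos e)
      (hasDerivAt_neg_mul_sin e) hφq hc

/-- for `β = 1`, a twice-differentiable function with periodic boundary
conditions solves `x'' = -x + x/(1+e cos t)` iff `x(t) = c (1 + e cos t)`;
the periodic solution space is exactly the span of `1 + e cos t`. -/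
theorem stmt_13 (e : ℝ) (he : e ∈ Set.Ico (0 : ℝ) 1)
    (x x' x'' : ℝ → ℝ)
    (hx : ∀ t, HasDerivAt x (x' t) t)
    (hx' : ∀ t, HasDerivAt x' (x'' t) t)
    (hbc1 : x (2 * π) = x 0) (hbc2 : x' (2 * π) = x' 0) :
    (∀ t, x'' t = -(x t) + x t / (1 + e * Real.cos t)) ↔
      ∃ c : ℝ, ∀ t, x t = c * (1 + e * Real.cos t) :=
  stmt_13_general e he x x' x'' hx hx' hbc1
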